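/- Let n ≥ 2, let T = (Q, π, λ) be a synchronous transducer over Fin n, and let m ≥ 1. Under the canonical identification of the state set of the m-fold product (∂T)^m with length-m words over Fin n, (∂T)^m equals the dual ∂(T(m)) of T(m): for every word w = x₁⋯x_m over Fin n and every q ∈ Q, the transducer (∂T)^m in the state corresponding to w, on input letter q, transitions to the state corresponding to the word λ*(w, q) and outputs π*(w, q). -/

import Mathlib

/-- The one-sided shift map on `(Fin n)^ℕ`: `(σ x) i = x (i+1)`. -/
def shiftMap (n : ℕ) : (ℕ → Fin n) → (ℕ → Fin n) := fun x i => x (i + 1)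

/-- `b` has orbit length exactly `N` under `f`: `N` is the least `L ≥ 1` with `f^[L] b = b`. -/
def HasOrbitLen {β : Type*} (f : β → β) (b : β) (N : ℕ) : Prop :=
  IsLeast {L : ℕ | 0 < L ∧ f^[L] b = b} N

/-- An automorphism of the one-sided shift: a homeomorphism commuting with the shift. -/
def IsShiftAut (n : ℕ) (φ : (ℕ → Fin n) ≃ₜ (ℕ → Fin n)) : Prop :=
  ⇑φ ∘ shiftMap n = shiftMap n ∘ ⇑φ

/-- `φ` has finite order. -/
def FiniteOrderAut (n : ℕ) (φ : (ℕ → Fin n) ≃ₜ (ℕ → Fin n)) : Prop :=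
  ∃ m : ℕ, 0 < m ∧ (⇑φ)^[m] = id

/-- Extension of the transition function of an automaton to words (letters read in order). -/
def transStar {n : ℕ} {Q : Type*} (π : Fin n → Q → Q) : List (Fin n) → Q → Q
  | [], q => q
  | x :: w, q => transStar π w (π x q)

/-- The automaton `(Q, π)` is synchronizing at level `k` with synchronizing map `s`. -/
def SyncAtLevelWith {n : ℕ} {Q : Type*} (π : Fin n → Q → Q) (k : ℕ)
    (s : List (Fin n) → Q) : Prop :=
  ∀ w : List (Fin n), w.length = k → ∀ q : Q, transStar π w q = s w

/-- The synchronizing map `s` at level `k` is surjective (the automaton is core). -/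
def CoreAt {n : ℕ} {Q : Type*} (s : List (Fin n) → Q) (k : ℕ) : Prop :=
  ∀ q : Q, ∃ w : List (Fin n), w.length = k ∧ s w = q

/-- An automorphism of the underlying digraph of the automaton `(Q, π)`. -/
structure DigraphAut {Q : Type*} (n : ℕ) (π : Fin n → Q → Q) where
  α : Q ≃ Q
  lab : Q → Equiv.Perm (Fin n)
  compat : ∀ (x : Fin n) (q : Q), π (lab q x) (α q) = α (π x q)

/-- Action of a digraph automorphism on the edge set `Q × Fin n`. -/
def edgeMap {Q : Type*} {n : ℕ} {π : Fin n → Q → Q} (Φ : DigraphAut n π) :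
    Q × Fin n → Q × Fin n :=
  fun e => (Φ.α e.1, Φ.lab e.1 e.2)

/-- The output word map `Λ` of a digraph automorphism. -/
def outWord {Q : Type*} {n : ℕ} (π : Fin n → Q → Q) (lab : Q → Equiv.Perm (Fin n)) :
    List (Fin n) → Q → List (Fin n)
  | [], _ => []
  | x :: w, q => lab q x :: outWord π lab w (π x q)

/-- Action of a digraph automorphism on based circuits: `(q, w) ↦ (α q, Λ(w, q))`. -/
def circMap {Q : Type*} {n : ℕ} {π : Fin n → Q → Q} (Φ : DigraphAut n π) :
    Q × List (Fin n) → Q × List (Fin n) :=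
  fun c => (Φ.α c.1, outWord π Φ.lab c.2 c.1)

/-- `(q, w)` is a based circuit: `w` nonempty and `π*(w, q) = q`. -/
def IsBasedCircuit {Q : Type*} {n : ℕ} (π : Fin n → Q → Q) (c : Q × List (Fin n)) : Prop :=
  c.2 ≠ [] ∧ transStar π c.2 c.1 = c.1

/-- The sliding block code induced by an automaton synchronizing at level `k`
with synchronizing map `s` and digraph automorphism with labelling `lab`:
`(F x) i = lab q_i (x i)` where `q_i = s [x(i+k), x(i+k-1), …, x(i+1)]`. -/
def inducedMap {Q : Type*} {n : ℕ} (k : ℕ) (s : List (Fin n) → Q)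
    (lab : Q → Equiv.Perm (Fin n)) : (ℕ → Fin n) → (ℕ → Fin n) :=
  fun x i => lab (s (List.ofFn fun j : Fin k => x (i + k - (j : ℕ)))) (x i)

/-- `(A, Φ)` (with `A` synchronizing and core) is a support of the shift automorphism `φ`. -/
def IsSupport {Q : Type*} (n : ℕ) (π : Fin n → Q → Q) (Φ : DigraphAut n π)
    (φ : (ℕ → Fin n) ≃ₜ (ℕ → Fin n)) : Prop :=
  ∃ (k : ℕ) (s : List (Fin n) → Q), SyncAtLevelWith π k s ∧ CoreAt s k ∧
    inducedMap k s Φ.lab = ⇑φ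

/-- The permutation automorphism of the shift induced by a permutation of `Fin n`. -/
def permAutMap {n : ℕ} (ρ : Equiv.Perm (Fin n)) : (ℕ → Fin n) → (ℕ → Fin n) :=
  fun x i => ρ (x i)

/-- `t` is heavy for `(A, Φ, N)` with divisibility constant `b`. -/
def Heavy {Q : Type*} {n : ℕ} (π : Fin n → Q → Q) (Φ : DigraphAut n π)
    (N b : ℕ) (t : Q) : Prop :=
  b ∣ N ∧ b ≠ N ∧ (∀ r : ℕ, HasOrbitLen (⇑Φ.α) t r → r ∣ b) ∧
  ∀ (q : Q) (x : Fin n), π x q = t →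
    ∀ L : ℕ, HasOrbitLen (edgeMap Φ) (q, x) L → Nat.lcm L b = N

/-- A transducer with alphabet `A` and state set `S`. -/
structure Tdcr (A : Type*) (S : Type*) where
  tr : A → S → S
  out : A → S → A

/-- The `m`-fold product of a transducer with itself, with states identified
with `m`-tuples: the output of each factor is fed to the next. -/
def Tdcr.pow {A S : Type*} (T : Tdcr A S) : (m : ℕ) → Tdcr A (Fin m → S)
  | 0 => { tr := fun _ v => v, out := fun a _ => a }
  | m + 1 =>
    { tr := fun a v =>
        Fin.cons (T.tr a (v 0)) ((T.pow m).tr (T.out a (v 0)) (Fin.tail v)),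
      out := fun a v => (T.pow m).out (T.out a (v 0)) (Fin.tail v) }

/-- The dual of the synchronous transducer `(Q, π, lam)`: states `Fin n`,
alphabet `Q`; from state `x` on input `q` it moves to `lam x q` and outputs `π x q`. -/
def dualT {Q : Type*} {n : ℕ} (π : Fin n → Q → Q) (lam : Fin n → Q → Fin n) :
    Tdcr Q (Fin n) where
  tr q x := lam x q
  out q x := π x q

/-- The extension `λ*` of the output function of a synchronous transducer to words. -/
def lamStar {Q : Type*} {n : ℕ} (π : Fin n → Q → Q) (lam : Fin n → Q → Fin n) :
    List (Fin n) → Q → List (Fin n)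
  | [], _ => []
  | x :: w, q => lam x q :: lamStar π lam w (π x q)


theorem dual_pow_aux {n : ℕ} {Q : Type} (π : Fin n → Q → Q) (lam : Fin n → Q → Fin n) :
    ∀ (m : ℕ) (w : Fin m → Fin n) (q : Q),
    List.ofFn (((dualT π lam).pow m).tr q w) = lamStar π lam (List.ofFn w) q ∧
      ((dualT π lam).pow m).out q w = transStar π (List.ofFn w) q := by
  intro m
  induction m with
  | zero => intro w q; simp [Tdcr.pow, lamStar, transStar]
  | succ m ih =>
    intro w q
    have h := ih (Fin.tail w) (π (w 0) q)
    constructor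
    · simp only [Tdcr.pow, List.ofFn_succ, Fin.cons_zero, Fin.cons_succ, lamStar, dualT]
      exact congrArg _ h.1
    · simp only [Tdcr.pow, List.ofFn_succ, transStar, dualT]
      exact h.2

theorem dual_power_eq_dual_of_power (n : ℕ) (hn : 2 ≤ n)
    (Q : Type) [Fintype Q] [Nonempty Q]
    (π : Fin n → Q → Q) (lam : Fin n → Q → Fin n)
    (m : ℕ) (hm : 1 ≤ m) (w : Fin m → Fin n) (q : Q) :
    List.ofFn (((dualT π lam).pow m).tr q w) = lamStar π lam (List.ofFn w) q ∧
      ((dualT π lam).pow m).out q w = transStar π (List.ofFn w) q := by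
  exact dual_pow_aux π lam m w q
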